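/- arXiv:0905.3813 — 5 statements merged into one kernel-verified Lean document; each statement's English description precedes it below -/
import Mathlib

section
/- Let g : ℕ → ℝ satisfy |g(k)| ≤ C·R^k for some constants C, R > 0. Then the function λ ↦ Σ_{k≥0} e^{−λ} λ^k/k! · g(k) is differentiable at every λ > 0, with derivative equal to Σ_{k≥0} e^{−λ} λ^k/k! · (g(k+1) − g(k)); i.e. d/dλ E_λ[g(K)] = E_λ[g(K+1) − g(K)] for K Poisson of mean λ. -/
/-!
Writing `S g x = ∑ xᵏ/k! · g k`, the Poisson mean is `E_λ[g(K)] = e^{-λ} S g λ`. Geometric growth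
of `g` makes `S g` an entire power series, and differentiating it term by term shifts the index:
`(S g)' = S (g ∘ succ)`. The product rule then gives
`e^{-λ} (S (g ∘ succ) λ - S g λ) = E_λ[g(K+1) - g(K)]`.
-/

open Nat

noncomputable def expGenFun (g : ℕ → ℝ) (x : ℝ) : ℝ := ∑' k, x ^ k / k ! * g k

section

variable {g : ℕ → ℝ} {C R : ℝ}

theorem summable_pow_div_factorial_mul_of_abs_le (hg : ∀ k, |g k| ≤ C * R ^ k) (x : ℝ) :
    Summable fun k => x ^ k / k ! * g k := by
  refine ((Real.summable_pow_div_factorial (|x| * R)).mul_left C).of_norm_bounded fun k => ?_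
  rw [Real.norm_eq_abs, abs_mul, abs_div, abs_pow, Nat.abs_cast]
  calc |x| ^ k / k ! * |g k| ≤ |x| ^ k / k ! * (C * R ^ k) := by gcongr; exact hg k
    _ = C * ((|x| * R) ^ k / k !) := by ring

theorem abs_succ_le_mul_pow_of_abs_le (hg : ∀ k, |g k| ≤ C * R ^ k) (k : ℕ) :
    |g (k + 1)| ≤ C * R * R ^ k :=
  (hg (k + 1)).trans_eq (by ring)

theorem hasDerivAt_pow_succ_div_factorial (k : ℕ) (x : ℝ) :
    HasDerivAt (fun y : ℝ => y ^ (k + 1) / (k + 1)!) (x ^ k / k !) x := by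
  refine ((hasDerivAt_pow (k + 1) x).div_const ((k + 1)! : ℝ)).congr_deriv ?_
  rw [Nat.factorial_succ]
  push_cast
  field_simp

theorem hasDerivAt_expGenFun (hg : ∀ k, |g k| ≤ C * R ^ k) (x : ℝ) :
    HasDerivAt (expGenFun g) (expGenFun (fun k => g (k + 1)) x) x := by
  have hg_succ := abs_succ_le_mul_pow_of_abs_le hg
  have hsplit : expGenFun g = fun y => g 0 + ∑' k, y ^ (k + 1) / (k + 1)! * g (k + 1) := by
    funext y
    simpa [expGenFun] using (summable_pow_div_factorial_mul_of_abs_le hg y).tsum_eq_zero_add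
  set r := |x| + 1
  have hbound_summable : Summable fun k => r ^ k / k ! * |g (k + 1)| :=
    summable_pow_div_factorial_mul_of_abs_le (g := fun k => |g (k + 1)|)
      (fun k => (abs_abs _).trans_le (hg_succ k)) r
  have hbound : ∀ k, ∀ y ∈ Metric.ball (0 : ℝ) r,
      ‖y ^ k / k ! * g (k + 1)‖ ≤ r ^ k / k ! * |g (k + 1)| := by
    intro k y hy
    rw [mem_ball_zero_iff, Real.norm_eq_abs] at hy
    rw [Real.norm_eq_abs, abs_mul, abs_div, abs_pow, Nat.abs_cast]
    gcongr
  have hx : x ∈ Metric.ball (0 : ℝ) r := by simp [r]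
  rw [hsplit]
  exact (hasDerivAt_tsum_of_isPreconnected hbound_summable Metric.isOpen_ball
    (convex_ball 0 r).isPreconnected
    (fun k y _ => (hasDerivAt_pow_succ_div_factorial k y).mul_const (g (k + 1))) hbound hx
    ((summable_nat_add_iff 1).2 (summable_pow_div_factorial_mul_of_abs_le hg x)) hx).const_add _

end

theorem poisson_deriv_mean_general (g : ℕ → ℝ) (C R : ℝ)
    (hg : ∀ k : ℕ, |g k| ≤ C * R ^ k) (lam : ℝ) :
    HasDerivAt (fun l : ℝ => ∑' k : ℕ, Real.exp (-l) * l ^ k / (Nat.factorial k : ℝ) * g k)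
      (∑' k : ℕ, Real.exp (-lam) * lam ^ k / (Nat.factorial k : ℝ) * (g (k + 1) - g k))
      lam := by
  have hmean : (fun l : ℝ => ∑' k : ℕ, Real.exp (-l) * l ^ k / (Nat.factorial k : ℝ) * g k) =
      fun l => Real.exp (-l) * expGenFun g l := by
    funext l
    rw [expGenFun, ← tsum_mul_left]
    congr 1 with k
    ring
  have hmean_diff : ∑' k : ℕ, Real.exp (-lam) * lam ^ k / (Nat.factorial k : ℝ) * (g (k + 1) - g k)
      = Real.exp (-lam) * (expGenFun (fun k => g (k + 1)) lam - expGenFun g lam) := by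
    rw [expGenFun, expGenFun, ← (summable_pow_div_factorial_mul_of_abs_le
      (abs_succ_le_mul_pow_of_abs_le hg) lam).tsum_sub
      (summable_pow_div_factorial_mul_of_abs_le hg lam), ← tsum_mul_left]
    congr 1 with k
    ring
  rw [hmean, hmean_diff]
  exact ((hasDerivAt_neg lam).exp.fun_mul (hasDerivAt_expGenFun hg lam)).congr_deriv (by ring)

/-- For g of at most geometric growth, d/dλ E_λ[g(K)] = E_λ[g(K+1) − g(K)],
K a Poisson random variable of mean λ. -/
theorem poisson_deriv_mean (g : ℕ → ℝ) (C R : ℝ) (hC : 0 < C) (hR : 0 < R)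
    (hg : ∀ k : ℕ, |g k| ≤ C * R ^ k) (lam : ℝ) (hlam : 0 < lam) :
    HasDerivAt (fun l : ℝ => ∑' k : ℕ, Real.exp (-l) * l ^ k / (Nat.factorial k : ℝ) * g k)
      (∑' k : ℕ, Real.exp (-lam) * lam ^ k / (Nat.factorial k : ℝ) * (g (k + 1) - g k))
      lam :=
  poisson_deriv_mean_general g C R hg lam
end

section
/- Let p ≥ 2 be even, N ≥ 1, β ∈ ℝ, k₁, k₂ ∈ ℕ, and fix index families i : Fin k₁ → (Fin N)^p and j : Fin k₂ → (Fin N)^{p−1} (all indices among the first N sites). Then Σ_{σ : Fin(N+1) → {−1,1}} exp( β Σ_{ν=1}^{k₁} σ(i_ν(1))⋯σ(i_ν(p)) + β σ(N+1) Σ_{ν=1}^{k₂} σ(j_ν(1))⋯σ(j_ν(p−1)) ) = 2 · Σ_{σ : Fin N → {−1,1}} exp( β Σ_{ν=1}^{k₁} σ(i_ν(1))⋯σ(i_ν(p)) + β Σ_{ν=1}^{k₂} σ(j_ν(1))⋯σ(j_ν(p−1)) ). That is, by the spin-flip gauge symmetry, the (N+1)-spin partition function of the decomposed Hamiltonian equals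 twice the partition function of the N-spin system in which the cavity field terms are absorbed as (p−1)-body interactions. -/
/-- Spin value (±1) of a Boolean; configurations on M sites are `Fin M → Bool`. -/
noncomputable def spin (b : Bool) : ℝ := if b then 1 else -1

lemma spin_xor (a b : Bool) : spin (a == b) = spin a * spin b := by
  cases a <;> cases b <;> simp [spin]

lemma spin_pow_even (b : Bool) {p : ℕ} (hp : Even p) : spin b ^ p = 1 := by
  cases b <;> simp [spin, hp.neg_one_pow]

/-- xor with a fixed bool as an equivalence -/
def xorEquiv (b : Bool) : Bool ≃ Bool :=
  ⟨fun x => x == b, fun x => x == b, by intro x; simp, by intro x; simp⟩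

/-- Spin-flip gauge symmetry: the (N+1)-spin partition function of the decomposed
diluted even p-spin Hamiltonian equals twice the partition function of the N-spin
system in which the cavity terms are absorbed as (p−1)-body interactions. -/
theorem gauge_partition_function (p N : ℕ) (hpeven : Even p) (hp : 2 ≤ p) (hN : 1 ≤ N)
    (β : ℝ) (k₁ k₂ : ℕ) (i : Fin k₁ → Fin p → Fin N) (j : Fin k₂ → Fin (p - 1) → Fin N) :
    (∑ σ : Fin (N + 1) → Bool,
        Real.exp (β * ∑ ν : Fin k₁, ∏ l : Fin p, spin (σ ((i ν l).castSucc))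
          + β * spin (σ (Fin.last N)) *
              ∑ ν : Fin k₂, ∏ l : Fin (p - 1), spin (σ ((j ν l).castSucc))))
      = 2 * ∑ σ : Fin N → Bool,
          Real.exp (β * ∑ ν : Fin k₁, ∏ l : Fin p, spin (σ (i ν l))
            + β * ∑ ν : Fin k₂, ∏ l : Fin (p - 1), spin (σ (j ν l))) := by
  rw [← (Fin.snocEquiv (fun _ : Fin (N + 1) => Bool)).sum_comp]
  rw [Fintype.sum_prod_type]
  have key : ∀ b : Bool, ∀ τ : Fin N → Bool,
      Real.exp (β * ∑ ν : Fin k₁, ∏ l : Fin p, spin (τ (i ν l) == b)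
          + β * spin b * ∑ ν : Fin k₂, ∏ l : Fin (p - 1), spin (τ (j ν l) == b))
      = Real.exp (β * ∑ ν : Fin k₁, ∏ l : Fin p, spin (τ (i ν l))
          + β * ∑ ν : Fin k₂, ∏ l : Fin (p - 1), spin (τ (j ν l))) := by
    intro b τ
    congr 1
    have h1 : ∀ ν : Fin k₁, ∏ l : Fin p, spin (τ (i ν l) == b)
        = ∏ l : Fin p, spin (τ (i ν l)) := by
      intro ν
      simp only [spin_xor, Finset.prod_mul_distrib, Finset.prod_const,
        Finset.card_univ, Fintype.card_fin, spin_pow_even b hpeven, mul_one]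
    have h2 : (spin b) * ∑ ν : Fin k₂, ∏ l : Fin (p - 1), spin (τ (j ν l) == b)
        = ∑ ν : Fin k₂, ∏ l : Fin (p - 1), spin (τ (j ν l)) := by
      rw [Finset.mul_sum]
      refine Finset.sum_congr rfl fun ν _ => ?_
      simp only [spin_xor, Finset.prod_mul_distrib, Finset.prod_const,
        Finset.card_univ, Fintype.card_fin]
      rw [← mul_assoc, mul_comm (spin b), mul_assoc, ← pow_succ',
        Nat.sub_add_cancel (by omega : 1 ≤ p), spin_pow_even b hpeven, mul_one]
    rw [mul_assoc, h2]
    congr 2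
    exact Finset.sum_congr rfl fun ν _ => h1 ν
  have inner : ∀ b : Bool,
      (∑ τ : Fin N → Bool,
        Real.exp (β * ∑ ν : Fin k₁, ∏ l : Fin p,
              spin (Fin.snocEquiv (fun _ : Fin (N+1) => Bool) (b, τ) ((i ν l).castSucc))
          + β * spin (Fin.snocEquiv (fun _ : Fin (N+1) => Bool) (b, τ) (Fin.last N)) *
              ∑ ν : Fin k₂, ∏ l : Fin (p - 1),
                spin (Fin.snocEquiv (fun _ : Fin (N+1) => Bool) (b, τ) ((j ν l).castSucc))))
      = ∑ σ : Fin N → Bool,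
          Real.exp (β * ∑ ν : Fin k₁, ∏ l : Fin p, spin (σ (i ν l))
            + β * ∑ ν : Fin k₂, ∏ l : Fin (p - 1), spin (σ (j ν l))) := by
    intro b
    simp only [Fin.snocEquiv, Equiv.coe_fn_mk, Fin.snoc_castSucc, Fin.snoc_last]
    rw [← (Equiv.piCongrRight (fun _ : Fin N => xorEquiv b)).sum_comp]
    refine Finset.sum_congr rfl fun τ _ => ?_
    simpa [xorEquiv, Equiv.piCongrRight] using key b τ
  rw [Finset.sum_congr rfl fun b _ => inner b]
  simp [two_mul]
end

section
/- Let p ≥ 2 be even, N ≥ 1, β ∈ ℝ, k₁, k₂ ∈ ℕ, index families i : Fin k₁ → (Fin N)^p and j : Fin k₂ → (Fin N)^{p−1}, and sites r_1,…,r_n ∈ Fin N. Let ω_{N+1} be the Gibbs average on {−1,1}^{N+1} for the decomposed Hamiltonian −Σ_ν σ(i_ν(1))⋯σ(i_ν(p)) − σ(N+1) Σ_ν σ(j_ν(1))⋯σ(j_ν(p−1)), and let ω̃_N be the Gibbs average on {−1,1}^N for the Hamiltonian −Σ_ν σ(i_ν(1))⋯σ(i_ν(p)) − Σ_ν σ(j_ν(1))⋯σ(j_ν(p−1)).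 Then ω_{N+1}( σ(r_1)⋯σ(r_n) · σ(N+1)^n ) = ω̃_N( σ(r_1)⋯σ(r_n) ). (This is the exact finite-size gauge identity behind the paper's Theorem 2: the perturbed N-spin state evaluated on a spin monomial equals the (N+1)-spin state evaluated on the same monomial times σ_{N+1}^n.) -/
lemma spin_not (b : Bool) : spin (!b) = -spin b := by cases b <;> simp [spin]

lemma spin_true : spin true = 1 := rfl
lemma spin_false : spin false = -1 := rfl

/-- Split a sum over `Fin (N+1) → Bool` by the last coordinate. -/
def snocEquivBool (N : ℕ) : ((Fin N → Bool) × Bool) ≃ (Fin (N + 1) → Bool) where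
  toFun x := Fin.snoc x.1 x.2
  invFun σ := (Fin.init σ, σ (Fin.last N))
  left_inv x := by simp
  right_inv σ := by simp [Fin.snoc_init_self]

lemma sum_snoc_split (N : ℕ) (F : (Fin (N + 1) → Bool) → ℝ) :
    ∑ σ : Fin (N + 1) → Bool, F σ
      = ∑ τ : Fin N → Bool, (F (Fin.snoc τ true) + F (Fin.snoc τ false)) := by
  rw [← Fintype.sum_equiv (snocEquivBool N) (fun x => F (Fin.snoc x.1 x.2)) F
    (fun x => rfl)]
  rw [Fintype.sum_prod_type]
  exact Finset.sum_congr rfl fun τ _ => by rw [Fintype.sum_bool]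

lemma prod_neg {α : Type*} [Fintype α] (g : α → ℝ) :
    ∏ a : α, (-g a) = (-1 : ℝ) ^ Fintype.card α * ∏ a : α, g a := by
  rw [Finset.prod_congr rfl fun a _ => (neg_one_mul (g a)).symm, Finset.prod_mul_distrib,
    Finset.prod_const, Finset.card_univ]

/-- Finite-size gauge identity: the Gibbs average of a spin monomial times σ(N+1)^n in
the decomposed (N+1)-spin system equals the Gibbs average of the same monomial in the
perturbed (cavity) N-spin system. -/
theorem cavity_gauge_identity (p N : ℕ) (hpeven : Even p) (hp : 2 ≤ p) (hN : 1 ≤ N)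
    (β : ℝ) (k₁ k₂ n : ℕ) (i : Fin k₁ → Fin p → Fin N) (j : Fin k₂ → Fin (p - 1) → Fin N)
    (r : Fin n → Fin N) :
    (∑ σ : Fin (N + 1) → Bool,
        ((∏ l : Fin n, spin (σ ((r l).castSucc))) * spin (σ (Fin.last N)) ^ n) *
          Real.exp (β * ∑ ν : Fin k₁, ∏ l : Fin p, spin (σ ((i ν l).castSucc))
            + β * spin (σ (Fin.last N)) *
                ∑ ν : Fin k₂, ∏ l : Fin (p - 1), spin (σ ((j ν l).castSucc))))
      / (∑ σ : Fin (N + 1) → Bool,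
          Real.exp (β * ∑ ν : Fin k₁, ∏ l : Fin p, spin (σ ((i ν l).castSucc))
            + β * spin (σ (Fin.last N)) *
                ∑ ν : Fin k₂, ∏ l : Fin (p - 1), spin (σ ((j ν l).castSucc))))
    = (∑ σ : Fin N → Bool,
          (∏ l : Fin n, spin (σ (r l))) *
            Real.exp (β * ∑ ν : Fin k₁, ∏ l : Fin p, spin (σ (i ν l))
              + β * ∑ ν : Fin k₂, ∏ l : Fin (p - 1), spin (σ (j ν l))))
        / (∑ σ : Fin N → Bool,
            Real.exp (β * ∑ ν : Fin k₁, ∏ l : Fin p, spin (σ (i ν l))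
              + β * ∑ ν : Fin k₂, ∏ l : Fin (p - 1), spin (σ (j ν l)))) := by
  have hodd : Odd (p - 1) := Nat.Even.sub_odd (by omega) hpeven odd_one
  have hp1 : ((-1 : ℝ)) ^ p = 1 := hpeven.neg_one_pow
  have hp2 : ((-1 : ℝ)) ^ (p - 1) = -1 := hodd.neg_one_pow
  have hn2 : ((-1 : ℝ)) ^ n * (-1) ^ n = 1 := by
    rw [← pow_add]; exact Even.neg_one_pow ⟨n, rfl⟩
  -- the flip equivalence on N-spin configurations
  have hinv : Function.Involutive (fun (τ : Fin N → Bool) => fun a => !(τ a)) := by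
    intro τ; funext a; simp
  set e := hinv.toPerm with he
  -- key identities for snoc
  have hsc : ∀ (τ : Fin N → Bool) (b : Bool) (a : Fin N),
      Fin.snoc (α := fun _ => Bool) τ b a.castSucc = τ a := fun τ b a => Fin.snoc_castSucc ..
  have hsl : ∀ (τ : Fin N → Bool) (b : Bool),
      Fin.snoc (α := fun _ => Bool) τ b (Fin.last N) = b := fun τ b => Fin.snoc_last ..
  -- energies
  set E : (Fin N → Bool) → ℝ := fun τ =>
    β * ∑ ν : Fin k₁, ∏ l : Fin p, spin (τ (i ν l))
      + β * ∑ ν : Fin k₂, ∏ l : Fin (p - 1), spin (τ (j ν l)) with hE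
  -- energy is invariant under combined flip for the (N+1)-system with last spin false
  have hflipE : ∀ τ : Fin N → Bool,
      β * ∑ ν : Fin k₁, ∏ l : Fin p, spin (!(τ (i ν l)))
        + β * spin false * ∑ ν : Fin k₂, ∏ l : Fin (p - 1), spin (!(τ (j ν l))) = E τ := by
    intro τ
    have h1 : ∀ ν, ∏ l : Fin p, spin (!(τ (i ν l))) = ∏ l : Fin p, spin (τ (i ν l)) := by
      intro ν; simp only [spin_not]; rw [prod_neg]; simp [hp1]
    have h2 : ∀ ν, ∏ l : Fin (p-1), spin (!(τ (j ν l)))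
        = -∏ l : Fin (p-1), spin (τ (j ν l)) := by
      intro ν; simp only [spin_not]; rw [prod_neg]; simp [hp2]
    simp only [Finset.sum_congr rfl (fun ν _ => h1 ν), Finset.sum_congr rfl (fun ν _ => h2 ν)]
    simp only [hE, spin_false]
    ring_nf
    simp [Finset.sum_neg_distrib]
  -- numerator
  have hnum : (∑ σ : Fin (N + 1) → Bool,
        ((∏ l : Fin n, spin (σ ((r l).castSucc))) * spin (σ (Fin.last N)) ^ n) *
          Real.exp (β * ∑ ν : Fin k₁, ∏ l : Fin p, spin (σ ((i ν l).castSucc))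
            + β * spin (σ (Fin.last N)) *
                ∑ ν : Fin k₂, ∏ l : Fin (p - 1), spin (σ ((j ν l).castSucc))))
      = 2 * ∑ τ : Fin N → Bool, (∏ l : Fin n, spin (τ (r l))) * Real.exp (E τ) := by
    rw [sum_snoc_split]
    have : ∀ τ : Fin N → Bool,
        ((∏ l : Fin n, spin (Fin.snoc (α := fun _ => Bool) τ true ((r l).castSucc))) *
          spin (Fin.snoc (α := fun _ => Bool) τ true (Fin.last N)) ^ n) *
          Real.exp (β * ∑ ν : Fin k₁, ∏ l : Fin p,
              spin (Fin.snoc (α := fun _ => Bool) τ true ((i ν l).castSucc))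
            + β * spin (Fin.snoc (α := fun _ => Bool) τ true (Fin.last N)) *
                ∑ ν : Fin k₂, ∏ l : Fin (p - 1),
                  spin (Fin.snoc (α := fun _ => Bool) τ true ((j ν l).castSucc)))
        = (∏ l : Fin n, spin (τ (r l))) * Real.exp (E τ) := by
      intro τ
      simp only [hsc, hsl, spin_true, one_pow, mul_one, one_mul, hE]
    have h2 : (∑ τ : Fin N → Bool,
        ((∏ l : Fin n, spin (Fin.snoc (α := fun _ => Bool) τ false ((r l).castSucc))) *
          spin (Fin.snoc (α := fun _ => Bool) τ false (Fin.last N)) ^ n) *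
          Real.exp (β * ∑ ν : Fin k₁, ∏ l : Fin p,
              spin (Fin.snoc (α := fun _ => Bool) τ false ((i ν l).castSucc))
            + β * spin (Fin.snoc (α := fun _ => Bool) τ false (Fin.last N)) *
                ∑ ν : Fin k₂, ∏ l : Fin (p - 1),
                  spin (Fin.snoc (α := fun _ => Bool) τ false ((j ν l).castSucc))))
        = ∑ τ : Fin N → Bool, (∏ l : Fin n, spin (τ (r l))) * Real.exp (E τ) := by
      rw [← Equiv.sum_comp e]
      refine Finset.sum_congr rfl fun τ _ => ?_
      have heτ : ∀ a, e τ a = !(τ a) := fun a => rfl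
      simp only [hsc, hsl, heτ]
      rw [hflipE τ]
      congr 1
      have : ∏ l : Fin n, spin (!(τ (r l))) = (-1 : ℝ)^n * ∏ l : Fin n, spin (τ (r l)) := by
        simp only [spin_not]; rw [prod_neg]; simp
      rw [this, spin_false]
      rw [show (-1 : ℝ)^n * (∏ l : Fin n, spin (τ (r l))) * (-1)^n
          = ((-1:ℝ)^n * (-1)^n) * ∏ l : Fin n, spin (τ (r l)) by ring, hn2, one_mul]
    rw [Finset.sum_add_distrib, Finset.sum_congr rfl (fun τ _ => this τ), h2]
    ring
  -- denominator
  have hden : (∑ σ : Fin (N + 1) → Bool,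
          Real.exp (β * ∑ ν : Fin k₁, ∏ l : Fin p, spin (σ ((i ν l).castSucc))
            + β * spin (σ (Fin.last N)) *
                ∑ ν : Fin k₂, ∏ l : Fin (p - 1), spin (σ ((j ν l).castSucc))))
      = 2 * ∑ τ : Fin N → Bool, Real.exp (E τ) := by
    rw [sum_snoc_split]
    have h1 : ∀ τ : Fin N → Bool,
        Real.exp (β * ∑ ν : Fin k₁, ∏ l : Fin p,
              spin (Fin.snoc (α := fun _ => Bool) τ true ((i ν l).castSucc))
            + β * spin (Fin.snoc (α := fun _ => Bool) τ true (Fin.last N)) *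
                ∑ ν : Fin k₂, ∏ l : Fin (p - 1),
                  spin (Fin.snoc (α := fun _ => Bool) τ true ((j ν l).castSucc)))
        = Real.exp (E τ) := by
      intro τ; simp only [hsc, hsl, spin_true, one_mul, mul_one, hE]
    have h2 : (∑ τ : Fin N → Bool,
        Real.exp (β * ∑ ν : Fin k₁, ∏ l : Fin p,
              spin (Fin.snoc (α := fun _ => Bool) τ false ((i ν l).castSucc))
            + β * spin (Fin.snoc (α := fun _ => Bool) τ false (Fin.last N)) *
                ∑ ν : Fin k₂, ∏ l : Fin (p - 1),
                  spin (Fin.snoc (α := fun _ => Bool) τ false ((j ν l).castSucc))))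
        = ∑ τ : Fin N → Bool, Real.exp (E τ) := by
      rw [← Equiv.sum_comp e]
      refine Finset.sum_congr rfl fun τ _ => ?_
      have heτ : ∀ a, e τ a = !(τ a) := fun a => rfl
      simp only [hsc, hsl, heτ]
      rw [hflipE τ]
    rw [Finset.sum_add_distrib, Finset.sum_congr rfl (fun τ _ => h1 τ), h2]
    ring
  rw [hnum, hden, mul_div_mul_left _ _ (two_ne_zero)]
end

section
/- Fix N, p ≥ 1 and β ∈ ℝ. For k ∈ ℕ and i : Fin k → (Fin N)^p let Z(k,i) = Σ_{σ : Fin N → {−1,1}} exp( β Σ_{ν=1}^k σ(i_ν(1))⋯σ(i_ν(p)) ) and let ω_{k,i} denote the corresponding Gibbs average. Define F(λ) = Σ_{k=0}^∞ e^{−λ}λ^k/k! · N^{−pk} Σ_i ln Z(k,i). Then F is differentiable at every λ > 0 and F′(λ) = ln cosh β + Σ_{k=0}^∞ e^{−λ}λ^k/k! · N^{−pk} Σ_i [ N^{−p} Σ_{i₀ ∈ (Fin N)^p} ln( 1 + tanh β · ω_{k,i}( σ(i₀(1))⋯σ(i₀(p)) ) ) ]. In words: the derivative of the quenched pressure with respect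 to the Poisson mean equals ln cosh β plus the quenched average of ln(1 + θ ω(σ_{i₀^1}⋯σ_{i₀^p})) over a fresh uniform index p-tuple. -/
/-- Partition function of the diluted p-spin Hamiltonian with k interaction terms and
index family i. -/
noncomputable def Zdil (N p : ℕ) (β : ℝ) (k : ℕ) (i : Fin k → Fin p → Fin N) : ℝ :=
  ∑ σ : Fin N → Bool, Real.exp (β * ∑ ν : Fin k, ∏ l : Fin p, spin (σ (i ν l)))

/-- Gibbs average of an observable g for the diluted p-spin Hamiltonian. -/
noncomputable def gibbs (N p : ℕ) (β : ℝ) (k : ℕ) (i : Fin k → Fin p → Fin N)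
    (g : (Fin N → Bool) → ℝ) : ℝ :=
  (∑ σ : Fin N → Bool,
      g σ * Real.exp (β * ∑ ν : Fin k, ∏ l : Fin p, spin (σ (i ν l)))) / Zdil N p β k i

/-- Quenched expectation at Poisson mean λ: Poisson(λ) number of interaction terms with
independent uniformly distributed index p-tuples. -/
noncomputable def quenched (N p : ℕ) (lam : ℝ)
    (f : (k : ℕ) → (Fin k → Fin p → Fin N) → ℝ) : ℝ :=
  ∑' k : ℕ, Real.exp (-lam) * lam ^ k / (Nat.factorial k : ℝ) *
    ((1 / (N : ℝ) ^ (p * k)) * ∑ i : Fin k → Fin p → Fin N, f k i)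

open Real Finset
open scoped Nat BigOperators

namespace DilutedPSpin

noncomputable def poissonWeight (lam : ℝ) (k : ℕ) : ℝ := exp (-lam) * lam ^ k / k !

lemma hasSum_poissonWeight (lam : ℝ) : HasSum (poissonWeight lam) 1 := by
  have h := (NormedSpace.expSeries_div_hasSum_exp lam).mul_left (exp (-lam))
  rw [← exp_eq_exp_ℝ, ← exp_add, neg_add_cancel, exp_zero] at h
  show HasSum (fun k => exp (-lam) * lam ^ k / k !) 1
  simpa only [mul_div_assoc] using h

section PoissonSeries

variable {a : ℕ → ℝ} {C M : ℝ}

lemma abs_succ_le_mul_pow (ha : ∀ k, |a k| ≤ C * M ^ k) (k : ℕ) :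
    |a (k + 1)| ≤ C * M * M ^ k :=
  (ha (k + 1)).trans_eq (by ring)

lemma summable_mul_pow_div_factorial (ha : ∀ k, |a k| ≤ C * M ^ k) (x : ℝ) :
    Summable fun k => a k * x ^ k / k ! := by
  refine .of_norm_bounded ((summable_pow_div_factorial (M * |x|)).mul_left C) fun k => ?_
  rw [norm_eq_abs, abs_div, abs_mul, abs_pow, Nat.abs_cast, mul_pow, mul_div_assoc, mul_div_assoc,
    ← mul_assoc]
  exact mul_le_mul_of_nonneg_right (ha k) (by positivity)

lemma hasDerivAt_tsum_mul_pow_div_factorial (ha : ∀ k, |a k| ≤ C * M ^ k) (x : ℝ) :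
    HasDerivAt (fun y => ∑' k, a k * y ^ k / k !) (∑' k, a (k + 1) * x ^ k / k !) x := by
  set R := |x| + 1
  have hterm : ∀ k y, HasDerivAt (fun y => a (k + 1) * y ^ (k + 1) / (k + 1)!)
      (a (k + 1) * y ^ k / k !) y := fun k y => by
    refine (((hasDerivAt_pow (k + 1) y).const_mul (a (k + 1))).div_const _).congr_deriv ?_
    rw [Nat.factorial_succ, Nat.cast_mul, Nat.add_sub_cancel]
    field_simp
  have hbound : ∀ k, ∀ y ∈ Metric.ball (0 : ℝ) R,
      ‖(a (k + 1) * y ^ k / k !)‖ ≤ C * M * ((M * R) ^ k / k !) := fun k y hy => by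
    rw [mem_ball_zero_iff, norm_eq_abs] at hy
    rw [norm_eq_abs, abs_div, abs_mul, abs_pow, Nat.abs_cast, mul_pow, mul_div_assoc,
      mul_div_assoc, ← mul_assoc]
    have hCM : 0 ≤ C * M * M ^ k := (abs_nonneg _).trans (abs_succ_le_mul_pow ha k)
    gcongr
    · exact abs_succ_le_mul_pow ha k
  have hx : x ∈ Metric.ball (0 : ℝ) R := by
    rw [mem_ball_zero_iff, norm_eq_abs]; linarith
  have hshift := hasDerivAt_tsum_of_isPreconnected
    ((summable_pow_div_factorial (M * R)).mul_left (C * M)) Metric.isOpen_ball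
    (convex_ball 0 R).isPreconnected (fun k y _ => hterm k y) hbound hx
    ((summable_nat_add_iff 1).2 (summable_mul_pow_div_factorial ha x)) hx
  have hE : (fun y => ∑' k, a k * y ^ k / k !) =
      fun y => a 0 + ∑' k, a (k + 1) * y ^ (k + 1) / (k + 1)! := by
    ext y
    rw [(summable_mul_pow_div_factorial ha y).tsum_eq_zero_add]
    simp
  rw [hE]
  exact hshift.const_add _

lemma summable_poissonWeight_mul (ha : ∀ k, |a k| ≤ C * M ^ k) (lam : ℝ) :
    Summable fun k => poissonWeight lam k * a k :=
  ((summable_mul_pow_div_factorial ha lam).mul_left (exp (-lam))).congr fun k => by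
    simp only [poissonWeight]; ring

lemma hasDerivAt_tsum_poissonWeight_mul (ha : ∀ k, |a k| ≤ C * M ^ k) (lam : ℝ) :
    HasDerivAt (fun l => ∑' k, poissonWeight l k * a k)
      (∑' k, poissonWeight lam k * (a (k + 1) - a k)) lam := by
  have hfactor : ∀ (b : ℕ → ℝ) l,
      ∑' k, poissonWeight l k * b k = exp (-l) * ∑' k, b k * l ^ k / k ! := fun b l => by
    rw [← tsum_mul_left]
    exact tsum_congr fun k => by simp only [poissonWeight]; ring
  have hsub : ∑' k, (a (k + 1) - a k) * lam ^ k / k ! =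
      (∑' k, a (k + 1) * lam ^ k / k !) - ∑' k, a k * lam ^ k / k ! := by
    rw [← (summable_mul_pow_div_factorial (abs_succ_le_mul_pow ha) lam).tsum_sub
      (summable_mul_pow_div_factorial ha lam)]
    exact tsum_congr fun k => by ring
  simp only [hfactor]
  refine ((hasDerivAt_neg lam).exp.mul
    (hasDerivAt_tsum_mul_pow_div_factorial ha lam)).congr_deriv ?_
  rw [hsub]
  ring

lemma hasDerivAt_tsum_poissonWeight_mul_of_sub_eq (ha : ∀ k, |a k| ≤ C * M ^ k) {c : ℝ}
    {b : ℕ → ℝ} (hab : ∀ k, a (k + 1) - a k = c + b k) (lam : ℝ) :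
    HasDerivAt (fun l => ∑' k, poissonWeight l k * a k)
      (c + ∑' k, poissonWeight lam k * b k) lam := by
  have hw := hasSum_poissonWeight lam
  have hb : Summable fun k => poissonWeight lam k * b k :=
    (((summable_poissonWeight_mul (abs_succ_le_mul_pow ha) lam).sub
      (summable_poissonWeight_mul ha lam)).sub (hw.summable.mul_right c)).congr fun k => by
        rw [← mul_sub, hab]; ring
  convert hasDerivAt_tsum_poissonWeight_mul ha lam using 1
  simp only [hab, mul_add]
  rw [(hw.summable.mul_right c).tsum_add hb, tsum_mul_right, hw.tsum_eq, one_mul]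

end PoissonSeries

lemma abs_spin (b : Bool) : |spin b| = 1 := by
  cases b <;> simp [spin]

lemma abs_prod_spin {ι : Type*} [Fintype ι] (s : ι → Bool) : |∏ l, spin (s l)| = 1 := by
  rw [abs_prod]
  exact prod_eq_one fun l _ => abs_spin (s l)

lemma exp_mul_eq_cosh_mul_one_add_tanh_mul (β : ℝ) {s : ℝ} (hs : |s| = 1) :
    exp (β * s) = cosh β * (1 + tanh β * s) := by
  rw [tanh_eq_sinh_div_cosh, mul_add, mul_one, ← mul_assoc, mul_div_cancel₀ _ (cosh_pos β).ne']
  rcases (abs_eq zero_le_one).1 hs with rfl | rfl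
  · rw [mul_one, mul_one, cosh_add_sinh]
  · rw [mul_neg_one, mul_neg_one, ← sub_eq_add_neg, cosh_sub_sinh]

lemma one_add_tanh_mul_pos (β : ℝ) {x : ℝ} (hx : |x| ≤ 1) : 0 < 1 + tanh β * x := by
  have h : |tanh β * x| < 1 := by
    rw [abs_mul]
    exact (mul_le_of_le_one_right (abs_nonneg _) hx).trans_lt (abs_tanh_lt_one β)
  linarith [neg_abs_le (tanh β * x)]

section Gibbs

variable {N p : ℕ} (β : ℝ) {k : ℕ} (i : Fin k → Fin p → Fin N)

lemma abs_energy_le (σ : Fin N → Bool) :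
    |β * ∑ ν, ∏ l, spin (σ (i ν l))| ≤ |β| * k := by
  rw [abs_mul]
  gcongr
  refine (abs_sum_le_sum_abs _ _).trans_eq ?_
  simp [abs_prod_spin]

lemma Zdil_pos : 0 < Zdil N p β k i :=
  sum_pos (fun _ _ => exp_pos _) univ_nonempty

lemma abs_gibbs_le_one {g : (Fin N → Bool) → ℝ} (hg : ∀ σ, |g σ| ≤ 1) :
    |gibbs N p β k i g| ≤ 1 := by
  rw [gibbs, abs_div, abs_of_pos (Zdil_pos β i), div_le_one (Zdil_pos β i)]
  refine (abs_sum_le_sum_abs _ _).trans (sum_le_sum fun σ _ => ?_)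
  rw [abs_mul, abs_of_pos (exp_pos _)]
  exact mul_le_of_le_one_left (exp_pos _).le (hg σ)

lemma Zdil_cons (i₀ : Fin p → Fin N) :
    Zdil N p β (k + 1) (Fin.cons i₀ i) = cosh β * Zdil N p β k i *
      (1 + tanh β * gibbs N p β k i (fun σ => ∏ l, spin (σ (i₀ l)))) := by
  have hσ : ∀ σ : Fin N → Bool,
      exp (β * ∑ ν, ∏ l, spin (σ ((Fin.cons i₀ i : Fin (k + 1) → Fin p → Fin N) ν l))) =
        cosh β * (exp (β * ∑ ν, ∏ l, spin (σ (i ν l))) +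
          tanh β * ((∏ l, spin (σ (i₀ l))) * exp (β * ∑ ν, ∏ l, spin (σ (i ν l))))) := by
    intro σ
    rw [Fin.sum_univ_succ, mul_add, exp_add]
    simp only [Fin.cons_zero, Fin.cons_succ]
    rw [exp_mul_eq_cosh_mul_one_add_tanh_mul β (abs_prod_spin _)]
    ring
  rw [Zdil, sum_congr rfl fun σ _ => hσ σ, ← mul_sum, sum_add_distrib, ← mul_sum, gibbs, ← Zdil]
  field_simp [(Zdil_pos β i).ne']

lemma log_Zdil_cons (i₀ : Fin p → Fin N) :
    log (Zdil N p β (k + 1) (Fin.cons i₀ i)) = log (cosh β) + log (Zdil N p β k i) +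
      log (1 + tanh β * gibbs N p β k i (fun σ => ∏ l, spin (σ (i₀ l)))) := by
  have hcav := one_add_tanh_mul_pos β
    (abs_gibbs_le_one β i (g := fun σ => ∏ l, spin (σ (i₀ l))) fun σ => (abs_prod_spin _).le)
  rw [Zdil_cons, log_mul (mul_pos (cosh_pos β) (Zdil_pos β i)).ne' hcav.ne',
    log_mul (cosh_pos β).ne' (Zdil_pos β i).ne']

lemma abs_log_Zdil_le : |log (Zdil N p β k i)| ≤ N * log 2 + |β| * k := by
  have hcard : ((univ : Finset (Fin N → Bool)).card : ℝ) = 2 ^ N := by simp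
  have hlow : 2 ^ N * exp (-(|β| * k)) ≤ Zdil N p β k i := by
    rw [← hcard, ← nsmul_eq_mul]
    exact card_nsmul_le_sum _ _ _ fun σ _ => exp_le_exp.2 (neg_le_of_abs_le (abs_energy_le β i σ))
  have hup : Zdil N p β k i ≤ 2 ^ N * exp (|β| * k) := by
    rw [← hcard, ← nsmul_eq_mul]
    exact sum_le_card_nsmul _ _ _ fun σ _ => exp_le_exp.2 (le_of_abs_le (abs_energy_le β i σ))
  have hlog : ∀ c, log (2 ^ N * exp c) = N * log 2 + c := fun c => by
    rw [log_mul (by positivity) (exp_pos c).ne', log_pow, log_exp]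
  have h1 := log_le_log (by positivity) hlow
  have h2 := log_le_log (Zdil_pos β i) hup
  rw [hlog] at h1 h2
  rw [abs_le]
  constructor <;> linarith [(by positivity : (0 : ℝ) ≤ N * log 2)]

end Gibbs

lemma expect_fin_pi_eq_one_div_pow_mul_sum {m n : ℕ} (f : (Fin m → Fin n) → ℝ) :
    𝔼 x, f x = 1 / (n : ℝ) ^ m * ∑ x, f x := by
  rw [Fintype.expect_eq_sum_div_card, Fintype.card_fun, Fintype.card_fin, Fintype.card_fin]
  push_cast
  ring

lemma expect_pi_succ {m : ℕ} {α : Type*} [Fintype α] (f : (Fin (m + 1) → α) → ℝ) :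
    𝔼 x, f x = 𝔼 x₀, 𝔼 x, f (Fin.cons x₀ x) := by
  rw [← Fintype.expect_equiv (Fin.consEquiv fun _ => α) (fun q => f (Fin.cons q.1 q.2)) f
    fun _ => rfl, ← univ_product_univ, expect_product]

lemma quenched_eq_tsum_poissonWeight_mul_expect (N p : ℕ) (lam : ℝ)
    (f : (k : ℕ) → (Fin k → Fin p → Fin N) → ℝ) :
    quenched N p lam f = ∑' k, poissonWeight lam k * 𝔼 i, f k i := by
  refine tsum_congr fun k => ?_
  rw [Fintype.expect_eq_sum_div_card, Fintype.card_fun, Fintype.card_fun, Fintype.card_fin,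
    Fintype.card_fin, Fintype.card_fin, poissonWeight, pow_mul]
  push_cast
  ring

lemma expect_log_Zdil_succ (N p : ℕ) (hN : 1 ≤ N) (β : ℝ) (k : ℕ) :
    𝔼 i, log (Zdil N p β (k + 1) i) = log (cosh β) + 𝔼 i, log (Zdil N p β k i) +
      𝔼 i, 𝔼 i₀ : Fin p → Fin N,
        log (1 + tanh β * gibbs N p β k i (fun σ => ∏ l, spin (σ (i₀ l)))) := by
  have : Nonempty (Fin N) := ⟨⟨0, hN⟩⟩
  simp only [expect_pi_succ (m := k), log_Zdil_cons, expect_add_distrib, Fintype.expect_const]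
  rw [expect_comm]

lemma abs_expect_log_Zdil_le (N p : ℕ) (hN : 1 ≤ N) (β : ℝ) (k : ℕ) :
    |𝔼 i : Fin k → Fin p → Fin N, log (Zdil N p β k i)| ≤ 2 ^ N * exp |β| ^ k := by
  have hexp : N * log 2 + |β| * k ≤ 2 ^ N * exp |β| ^ k :=
    calc N * log 2 + |β| * k ≤ exp (N * log 2 + |β| * k) :=
          (lt_add_one _).le.trans (add_one_le_exp _)
      _ = 2 ^ N * exp |β| ^ k := by
          rw [exp_add, exp_nat_mul, exp_log two_pos, mul_comm |β|, exp_nat_mul]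
  have : Nonempty (Fin N) := ⟨⟨0, hN⟩⟩
  exact (abs_expect_le _ _).trans
    (expect_le univ_nonempty fun i _ => (abs_log_Zdil_le β i).trans hexp)

end DilutedPSpin

open DilutedPSpin

theorem quenched_pressure_deriv_general (N p : ℕ) (hN : 1 ≤ N) (β : ℝ)
    (lam : ℝ) :
    HasDerivAt (fun l : ℝ => quenched N p l (fun k i => Real.log (Zdil N p β k i)))
      (Real.log (Real.cosh β) +
        quenched N p lam (fun k i =>
          (1 / (N : ℝ) ^ p) * ∑ i₀ : Fin p → Fin N,
            Real.log (1 + Real.tanh β *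
              gibbs N p β k i (fun σ => ∏ l : Fin p, spin (σ (i₀ l))))))
      lam := by
  simp only [quenched_eq_tsum_poissonWeight_mul_expect, ← expect_fin_pi_eq_one_div_pow_mul_sum]
  exact hasDerivAt_tsum_poissonWeight_mul_of_sub_eq (abs_expect_log_Zdil_le N p hN β)
    (fun k => by rw [expect_log_Zdil_succ N p hN β k]; ring) lam

/-- The derivative of the quenched pressure with respect to the Poisson mean equals
ln cosh β plus the quenched average of ln(1 + θ ω(σ_{i₀¹}⋯σ_{i₀^p})) over a fresh
uniform index p-tuple i₀. -/
theorem quenched_pressure_deriv (N p : ℕ) (hN : 1 ≤ N) (hp : 1 ≤ p) (β : ℝ)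
    (lam : ℝ) (hlam : 0 < lam) :
    HasDerivAt (fun l : ℝ => quenched N p l (fun k i => Real.log (Zdil N p β k i)))
      (Real.log (Real.cosh β) +
        quenched N p lam (fun k i =>
          (1 / (N : ℝ) ^ p) * ∑ i₀ : Fin p → Fin N,
            Real.log (1 + Real.tanh β *
              gibbs N p β k i (fun σ => ∏ l : Fin p, spin (σ (i₀ l))))))
      lam :=
  quenched_pressure_deriv_general N p hN β lam
end

section
/- Fix N ≥ 1, p ≥ 2, β ∈ ℝ, λ₁ ≥ 0, γ̃ > 0 and s ≥ 1, and let F be a bounded function of s configurations (σ^1,…,σ^s) ∈ ({−1,1}^N)^s. Let ⟨F⟩_t denote the quenched average E[ Ω̃_t(F) ], where Ω̃_t is the s-fold product of the t-perturbed Gibbs state (k₁ Poisson(λ₁) p-body terms plus k₂ Poisson(2γ̃t) (p−1)-body terms, index tuples i.i.d. uniform). Then t ↦ ⟨F⟩_t is differentiable on (0,∞) and d⟨F⟩_t/dt = 2γ̃ ( E[ N^{−(p−1)} Σ_{i₀ ∈ (Fin N)^{p−1}} Ω̃_t( F · Π_{a=1}^s (1 + θ c_a) ) / (1 + θ ω̃_t(c))^s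 ] − ⟨F⟩_t ), where c(σ) = σ(i₀(1))⋯σ(i₀(p−1)), c_a = c(σ^a), ω̃_t is the single-replica perturbed Gibbs average and θ = tanh β. (This is the exact streaming equation established in the proof of the paper's Proposition 1, before expansion in powers of θ.) -/
/-- Interaction part (−H) of the t-perturbed diluted p-spin Hamiltonian: k₁ p-body
terms plus k₂ (p−1)-body cavity terms. -/
noncomputable def Hpert (N p : ℕ) (k₁ k₂ : ℕ) (i : Fin k₁ → Fin p → Fin N)
    (j : Fin k₂ → Fin (p - 1) → Fin N) (σ : Fin N → Bool) : ℝ :=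
  (∑ ν : Fin k₁, ∏ l : Fin p, spin (σ (i ν l)))
    + ∑ ν : Fin k₂, ∏ l : Fin (p - 1), spin (σ (j ν l))

/-- Partition function of the t-perturbed system. -/
noncomputable def Zpert (N p : ℕ) (β : ℝ) (k₁ k₂ : ℕ) (i : Fin k₁ → Fin p → Fin N)
    (j : Fin k₂ → Fin (p - 1) → Fin N) : ℝ :=
  ∑ σ : Fin N → Bool, Real.exp (β * Hpert N p k₁ k₂ i j σ)

/-- Single-replica perturbed Gibbs average ω̃. -/
noncomputable def omegaPert (N p : ℕ) (β : ℝ) (k₁ k₂ : ℕ) (i : Fin k₁ → Fin p → Fin N)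
    (j : Fin k₂ → Fin (p - 1) → Fin N) (g : (Fin N → Bool) → ℝ) : ℝ :=
  (∑ σ : Fin N → Bool, g σ * Real.exp (β * Hpert N p k₁ k₂ i j σ))
    / Zpert N p β k₁ k₂ i j

/-- s-fold replicated (product) perturbed Gibbs average Ω̃. -/
noncomputable def omegaPertRep (N p : ℕ) (β : ℝ) (s : ℕ) (k₁ k₂ : ℕ)
    (i : Fin k₁ → Fin p → Fin N) (j : Fin k₂ → Fin (p - 1) → Fin N)
    (g : (Fin s → (Fin N → Bool)) → ℝ) : ℝ :=
  (∑ σs : Fin s → (Fin N → Bool),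
      g σs * ∏ a : Fin s, Real.exp (β * Hpert N p k₁ k₂ i j (σs a)))
    / (Zpert N p β k₁ k₂ i j) ^ s

/-- Quenched expectation: k₁ Poisson of mean λ₁, k₂ Poisson of mean λ₂, all index
tuples i.i.d. uniform. -/
noncomputable def quenched2 (N p : ℕ) (lam₁ lam₂ : ℝ)
    (f : (k₁ : ℕ) → (k₂ : ℕ) → (Fin k₁ → Fin p → Fin N) →
          (Fin k₂ → Fin (p - 1) → Fin N) → ℝ) : ℝ :=
  ∑' k₁ : ℕ, ∑' k₂ : ℕ,
    (Real.exp (-lam₁) * lam₁ ^ k₁ / (Nat.factorial k₁ : ℝ)) *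
      (Real.exp (-lam₂) * lam₂ ^ k₂ / (Nat.factorial k₂ : ℝ)) *
        ((1 / (N : ℝ) ^ (p * k₁)) * (1 / (N : ℝ) ^ ((p - 1) * k₂)) *
          ∑ i : Fin k₁ → Fin p → Fin N, ∑ j : Fin k₂ → Fin (p - 1) → Fin N, f k₁ k₂ i j)

/-
Since a product of spins is ±1, e^{βc} = cosh β (1 + θ c) with θ = tanh β. Hence appending one
(p−1)-body term with index tuple i₀ to the Hamiltonian turns Ω̃(F) into
Ω̃(F ∏ₐ (1 + θ cₐ)) / (1 + θ ω̃(c))^s, the powers of cosh β cancelling against the partition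
function; averaging over i₀ thus expresses the disorder average with k₂ + 1 cavity terms through
the one with k₂ terms. For bounded coefficients d, the Poisson mixture x ↦ Σₖ e^{-x} xᵏ/k! dₖ has
derivative Σₖ e^{-x} xᵏ/k! (dₖ₊₁ − dₖ); applied at x = 2γ̃t to the coefficients obtained by
averaging over k₁, this is the streaming equation.
-/

open Finset Real

lemma prod_spin_eq_one_or_eq_neg_one {ι : Type*} [Fintype ι] (v : ι → Bool) :
    ∏ l, spin (v l) = 1 ∨ ∏ l, spin (v l) = -1 := by
  refine (abs_eq zero_le_one).mp ?_
  rw [abs_prod]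
  exact prod_eq_one fun l _ => by cases v l <;> simp [spin]

lemma exp_mul_eq_cosh_mul_one_add_tanh_mul (β : ℝ) {x : ℝ} (hx : x = 1 ∨ x = -1) :
    exp (β * x) = cosh β * (1 + tanh β * x) := by
  have hsinh : cosh β * tanh β = sinh β := by
    rw [tanh_eq_sinh_div_cosh, mul_div_cancel₀ _ (cosh_pos β).ne']
  rcases hx with rfl | rfl
  · rw [mul_one, ← cosh_add_sinh, ← hsinh]; ring
  · rw [mul_neg_one, ← cosh_sub_sinh, ← hsinh]; ring

lemma Zpert_pos (N p : ℕ) (β : ℝ) (k₁ k₂ : ℕ) (i : Fin k₁ → Fin p → Fin N)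
    (j : Fin k₂ → Fin (p - 1) → Fin N) : 0 < Zpert N p β k₁ k₂ i j :=
  sum_pos (fun _ _ => exp_pos _) univ_nonempty

section Cavity

variable {N p : ℕ} (β : ℝ) {k₁ k₂ : ℕ} (i : Fin k₁ → Fin p → Fin N)
  (j : Fin k₂ → Fin (p - 1) → Fin N) (i₀ : Fin (p - 1) → Fin N)

lemma exp_Hpert_cons (σ : Fin N → Bool) :
    exp (β * Hpert N p k₁ (k₂ + 1) i (Fin.cons i₀ j) σ)
      = cosh β * ((1 + tanh β * ∏ l, spin (σ (i₀ l))) * exp (β * Hpert N p k₁ k₂ i j σ)) := by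
  have hH : Hpert N p k₁ (k₂ + 1) i (Fin.cons i₀ j) σ
      = ∏ l, spin (σ (i₀ l)) + Hpert N p k₁ k₂ i j σ := by
    simp only [Hpert, Fin.sum_univ_succ, Fin.cons_zero, Fin.cons_succ]
    ring
  rw [hH, mul_add, exp_add,
    exp_mul_eq_cosh_mul_one_add_tanh_mul β (prod_spin_eq_one_or_eq_neg_one _), mul_assoc]

lemma Zpert_cons :
    Zpert N p β k₁ (k₂ + 1) i (Fin.cons i₀ j)
      = cosh β * Zpert N p β k₁ k₂ i j
          * (1 + tanh β * omegaPert N p β k₁ k₂ i j fun σ => ∏ l, spin (σ (i₀ l))) := by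
  have hω := div_mul_cancel₀ (∑ σ, (∏ l, spin (σ (i₀ l))) * exp (β * Hpert N p k₁ k₂ i j σ))
    (Zpert_pos N p β k₁ k₂ i j).ne'
  rw [← omegaPert] at hω
  rw [mul_assoc, mul_one_add, mul_comm (Zpert _ _ _ _ _ _ _), mul_assoc, hω, Zpert, Zpert,
    mul_sum, ← sum_add_distrib, mul_sum]
  simp only [exp_Hpert_cons]
  exact sum_congr rfl fun σ _ => by ring

lemma omegaPertRep_cons {s : ℕ} (F : (Fin s → (Fin N → Bool)) → ℝ) :
    omegaPertRep N p β s k₁ (k₂ + 1) i (Fin.cons i₀ j) F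
      = omegaPertRep N p β s k₁ k₂ i j
            (fun σs => F σs * ∏ a, (1 + tanh β * ∏ l, spin (σs a (i₀ l))))
          / (1 + tanh β * omegaPert N p β k₁ k₂ i j fun σ => ∏ l, spin (σ (i₀ l))) ^ s := by
  have hnum : ∑ σs : Fin s → Fin N → Bool,
      F σs * ∏ a, exp (β * Hpert N p k₁ (k₂ + 1) i (Fin.cons i₀ j) (σs a))
      = cosh β ^ s * ∑ σs : Fin s → Fin N → Bool,
          (F σs * ∏ a, (1 + tanh β * ∏ l, spin (σs a (i₀ l))))
            * ∏ a, exp (β * Hpert N p k₁ k₂ i j (σs a)) := by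
    rw [mul_sum]
    refine sum_congr rfl fun σs _ => ?_
    simp only [exp_Hpert_cons, prod_mul_distrib, prod_const, card_univ, Fintype.card_fin]
    ring
  rw [omegaPertRep, omegaPertRep, hnum, Zpert_cons, mul_pow, mul_pow, mul_assoc,
    mul_div_mul_left _ _ (pow_ne_zero s (cosh_pos β).ne'), div_div]

end Cavity

lemma abs_sum_mul_div_sum_le {ι : Type*} [Fintype ι] [Nonempty ι] {g w : ι → ℝ} {C : ℝ}
    (hw : ∀ i, 0 < w i) (hg : ∀ i, |g i| ≤ C) : |(∑ i, g i * w i) / ∑ i, w i| ≤ C := by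
  have hW : 0 < ∑ i, w i := sum_pos (fun i _ => hw i) univ_nonempty
  rw [abs_div, abs_of_pos hW, div_le_iff₀ hW, mul_sum]
  refine (abs_sum_le_sum_abs _ _).trans (sum_le_sum fun i _ => ?_)
  rw [abs_mul, abs_of_pos (hw i)]
  exact mul_le_mul_of_nonneg_right (hg i) (hw i).le

lemma abs_omegaPertRep_le (N p : ℕ) (β : ℝ) (s k₁ k₂ : ℕ) (i : Fin k₁ → Fin p → Fin N)
    (j : Fin k₂ → Fin (p - 1) → Fin N) {g : (Fin s → Fin N → Bool) → ℝ} {C : ℝ}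
    (hg : ∀ σs, |g σs| ≤ C) : |omegaPertRep N p β s k₁ k₂ i j g| ≤ C := by
  rw [omegaPertRep, Zpert, Fintype.sum_pow]
  exact abs_sum_mul_div_sum_le (fun σs => prod_pos fun a _ => exp_pos _) hg

lemma abs_one_div_card_mul_sum_le {ι : Type*} [Fintype ι] {g : ι → ℝ} {C : ℝ} (hC : 0 ≤ C)
    (hg : ∀ i, |g i| ≤ C) : |1 / Fintype.card ι * ∑ i, g i| ≤ C := by
  rcases isEmpty_or_nonempty ι with hι | hι
  · simpa using hC
  have hcard : (0 : ℝ) < Fintype.card ι := by exact_mod_cast Fintype.card_pos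
  rw [abs_mul, abs_of_pos (by positivity), one_div_mul_eq_div, div_le_iff₀ hcard]
  refine (abs_sum_le_sum_abs _ _).trans ?_
  simpa [mul_comm C] using sum_le_card_nsmul univ _ C fun i _ => hg i

lemma card_fin_fun_fin_fun (k n N : ℕ) :
    ((Fintype.card (Fin k → Fin n → Fin N) : ℕ) : ℝ) = (N : ℝ) ^ (n * k) := by
  simp [pow_mul]

noncomputable def indexAvg (N p k₁ k₂ : ℕ)
    (f : (Fin k₁ → Fin p → Fin N) → (Fin k₂ → Fin (p - 1) → Fin N) → ℝ) : ℝ :=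
  (1 / (N : ℝ) ^ (p * k₁)) * (1 / (N : ℝ) ^ ((p - 1) * k₂)) * ∑ i, ∑ j, f i j

lemma abs_indexAvg_le {N p k₁ k₂ : ℕ}
    {f : (Fin k₁ → Fin p → Fin N) → (Fin k₂ → Fin (p - 1) → Fin N) → ℝ} {C : ℝ} (hC : 0 ≤ C)
    (hf : ∀ i j, |f i j| ≤ C) : |indexAvg N p k₁ k₂ f| ≤ C := by
  rw [indexAvg, mul_assoc, mul_sum, ← card_fin_fun_fin_fun k₁, ← card_fin_fun_fin_fun k₂]
  exact abs_one_div_card_mul_sum_le hC fun i => abs_one_div_card_mul_sum_le hC (hf i)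

lemma sum_fin_succ_fun_eq_sum_sum_cons {k : ℕ} {X M : Type*} [Fintype X] [AddCommMonoid M]
    (f : (Fin (k + 1) → X) → M) :
    ∑ v, f v = ∑ x, ∑ g : Fin k → X, f (Fin.cons x g) := by
  rw [← (Fin.consEquiv fun _ => X).sum_comp, Fintype.sum_prod_type]
  rfl

lemma indexAvg_succ {N p k₁ k₂ : ℕ}
    (f : (Fin k₁ → Fin p → Fin N) → (Fin (k₂ + 1) → Fin (p - 1) → Fin N) → ℝ) :
    indexAvg N p k₁ (k₂ + 1) f
      = indexAvg N p k₁ k₂ fun i j => 1 / (N : ℝ) ^ (p - 1) * ∑ i₀, f i (Fin.cons i₀ j) := by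
  simp only [indexAvg, sum_fin_succ_fun_eq_sum_sum_cons (f _), ← mul_sum]
  rw [Nat.mul_succ, pow_add, ← one_div_mul_one_div]
  simp only [sum_comm (γ := Fin (p - 1) → Fin N)]
  ring

noncomputable def poissonWeight (lam : ℝ) (k : ℕ) : ℝ := exp (-lam) * lam ^ k / k.factorial

lemma abs_poissonWeight (lam : ℝ) (k : ℕ) :
    |poissonWeight lam k| = exp (-lam) * (|lam| ^ k / k.factorial) := by
  rw [poissonWeight, abs_div, abs_mul, abs_pow, abs_of_pos (exp_pos _), Nat.abs_cast,
    mul_div_assoc]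

lemma summable_abs_poissonWeight (lam : ℝ) : Summable fun k => |poissonWeight lam k| := by
  simpa only [abs_poissonWeight] using (Real.summable_pow_div_factorial |lam|).mul_left _

lemma abs_tsum_mul_le {ι : Type*} {a B : ι → ℝ} {C : ℝ} (ha : Summable fun i => |a i|)
    (hB : ∀ i, |B i| ≤ C) : |∑' i, a i * B i| ≤ (∑' i, |a i|) * C := by
  have hle : ∀ i, ‖a i * B i‖ ≤ |a i| * C := fun i => by
    rw [Real.norm_eq_abs, abs_mul]
    exact mul_le_mul_of_nonneg_left (hB i) (abs_nonneg _)
  have hS : Summable fun i => ‖a i * B i‖ :=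
    .of_nonneg_of_le (fun _ => norm_nonneg _) hle (ha.mul_right C)
  calc |∑' i, a i * B i| ≤ ∑' i, ‖a i * B i‖ := norm_tsum_le_tsum_norm hS
    _ ≤ ∑' i, |a i| * C := hS.tsum_le_tsum hle (ha.mul_right C)
    _ = (∑' i, |a i|) * C := tsum_mul_right

lemma tsum_tsum_mul_mul_comm {α β : Type*} {a : α → ℝ} {b : β → ℝ} {B : α → β → ℝ} {C : ℝ}
    (ha : Summable fun m => |a m|) (hb : Summable fun n => |b n|) (hB : ∀ m n, |B m n| ≤ C) :
    ∑' m, ∑' n, a m * b n * B m n = ∑' n, b n * ∑' m, a m * B m n := by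
  have hab : Summable fun q : α × β => ‖a q.1 * b q.2‖ * C := by
    simp only [norm_mul, Real.norm_eq_abs]
    exact (summable_mul_of_summable_norm (f := fun m => |a m|) (g := fun n => |b n|)
      (by simpa using ha) (by simpa using hb)).mul_right C
  have hS : Summable (Function.uncurry fun m n => a m * b n * B m n) :=
    .of_norm_bounded hab fun q => by
      rw [Function.uncurry_apply_pair, norm_mul _ (B _ _), Real.norm_eq_abs (B _ _)]
      exact mul_le_mul_of_nonneg_left (hB q.1 q.2) (norm_nonneg _)
  rw [← hS.tsum_comm]
  refine tsum_congr fun n => ?_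
  rw [← tsum_mul_left]
  exact tsum_congr fun m => by ring

lemma hasDerivAt_tsum_mul_pow_div_factorial {d : ℕ → ℝ} {C : ℝ} (hd : ∀ k, |d k| ≤ C)
    (x : ℝ) :
    HasDerivAt (fun y => ∑' k, d k * (y ^ k / k.factorial))
      (∑' k, d (k + 1) * (x ^ k / k.factorial)) x := by
  have hC : 0 ≤ C := (abs_nonneg _).trans (hd 0)
  have hshift : ∀ (y : ℝ) (n : ℕ),
      ((n + 1 : ℕ) : ℝ) * y ^ (n + 1 - 1) / (n + 1).factorial = y ^ n / n.factorial := by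
    intro y n
    rw [Nat.add_sub_cancel, Nat.factorial_succ, Nat.cast_mul, mul_div_mul_left]
    positivity
  set R := |x| + 1
  set g' : ℕ → ℝ → ℝ := fun k y => d k * (k * y ^ (k - 1) / k.factorial)
  set u : ℕ → ℝ := fun k => C * (k * R ^ (k - 1) / k.factorial)
  have hu : Summable u := by
    rw [← summable_nat_add_iff 1]
    simpa only [u, hshift] using (Real.summable_pow_div_factorial R).mul_left C
  have hg' : ∀ k, ∀ y ∈ Metric.ball (0 : ℝ) R, ‖g' k y‖ ≤ u k := by
    intro k y hy
    rw [mem_ball_zero_iff, Real.norm_eq_abs] at hy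
    rw [Real.norm_eq_abs, abs_mul, abs_div, abs_mul, abs_pow, Nat.abs_cast, Nat.abs_cast]
    dsimp only [u]
    gcongr
    exact hd k
  have hx : x ∈ Metric.ball (0 : ℝ) R := by
    rw [mem_ball_zero_iff, Real.norm_eq_abs]
    exact lt_add_one _
  have hsum : Summable fun k => d k * (x ^ k / k.factorial) :=
    .of_norm_bounded ((Real.summable_pow_div_factorial |x|).mul_left C) fun k => by
      rw [Real.norm_eq_abs, abs_mul, abs_div, abs_pow, Nat.abs_cast]
      gcongr
      exact hd k
  have H := hasDerivAt_tsum_of_isPreconnected hu Metric.isOpen_ball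
    (convex_ball (0 : ℝ) R).isPreconnected
    (fun k y _ => ((hasDerivAt_pow k y).div_const _).const_mul (d k)) hg' hx hsum hx
  rw [(Summable.of_norm_bounded hu fun k => hg' k x hx).tsum_eq_zero_add] at H
  simpa only [g', hshift, CharP.cast_eq_zero, zero_mul, zero_div, mul_zero, zero_add] using H

lemma hasDerivAt_tsum_poissonWeight_mul {d : ℕ → ℝ} {C : ℝ} (hd : ∀ k, |d k| ≤ C) (x : ℝ) :
    HasDerivAt (fun y => ∑' k, poissonWeight y k * d k)
      (∑' k, poissonWeight x k * d (k + 1) - ∑' k, poissonWeight x k * d k) x := by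
  have hfactor : ∀ (e : ℕ → ℝ) y, ∑' k, poissonWeight y k * e k
      = exp (-y) * ∑' k, e k * (y ^ k / k.factorial) := fun e y => by
    rw [← tsum_mul_left]
    exact tsum_congr fun k => by rw [poissonWeight]; ring
  simp only [hfactor]
  have hexp : HasDerivAt (fun y => exp (-y)) (-exp (-x)) x := by
    simpa using (hasDerivAt_neg x).exp
  exact (hexp.fun_mul (hasDerivAt_tsum_mul_pow_div_factorial hd x)).congr_deriv (by ring)

lemma quenched2_eq_tsum_poissonWeight {N p : ℕ} {lam₁ lam₂ C : ℝ}
    {f : (k₁ k₂ : ℕ) → (Fin k₁ → Fin p → Fin N) → (Fin k₂ → Fin (p - 1) → Fin N) → ℝ}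
    (hf : ∀ k₁ k₂, |indexAvg N p k₁ k₂ (f k₁ k₂)| ≤ C) :
    quenched2 N p lam₁ lam₂ f
      = ∑' k₂, poissonWeight lam₂ k₂ *
          ∑' k₁, poissonWeight lam₁ k₁ * indexAvg N p k₁ k₂ (f k₁ k₂) :=
  tsum_tsum_mul_mul_comm (summable_abs_poissonWeight lam₁) (summable_abs_poissonWeight lam₂) hf

theorem streaming_equation_general (N p : ℕ) (β : ℝ)
    (lam₁ gam : ℝ) (s : ℕ)
    (F : (Fin s → (Fin N → Bool)) → ℝ)
    (t : ℝ) :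
    HasDerivAt
      (fun u : ℝ => quenched2 N p lam₁ (2 * gam * u)
        (fun k₁ k₂ i j => omegaPertRep N p β s k₁ k₂ i j F))
      (2 * gam *
        (quenched2 N p lam₁ (2 * gam * t) (fun k₁ k₂ i j =>
            (1 / (N : ℝ) ^ (p - 1)) * ∑ i₀ : Fin (p - 1) → Fin N,
              omegaPertRep N p β s k₁ k₂ i j
                  (fun σs => F σs * ∏ a : Fin s,
                    (1 + Real.tanh β * ∏ l : Fin (p - 1), spin (σs a (i₀ l))))
                / (1 + Real.tanh β *
                    omegaPert N p β k₁ k₂ i j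
                      (fun σ => ∏ l : Fin (p - 1), spin (σ (i₀ l)))) ^ s)
          - quenched2 N p lam₁ (2 * gam * t)
              (fun k₁ k₂ i j => omegaPertRep N p β s k₁ k₂ i j F)))
      t := by
  set M := ∑ σs, |F σs|
  have hA : ∀ k₁ k₂, |indexAvg N p k₁ k₂ fun i j => omegaPertRep N p β s k₁ k₂ i j F| ≤ M :=
    fun k₁ k₂ => abs_indexAvg_le (sum_nonneg fun _ _ => abs_nonneg _) fun i j =>
      abs_omegaPertRep_le N p β s k₁ k₂ i j fun σs =>
        single_le_sum (f := fun σs => |F σs|) (fun _ _ => abs_nonneg _) (mem_univ σs)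
  set d : ℕ → ℝ := fun k₂ => ∑' k₁,
    poissonWeight lam₁ k₁ * indexAvg N p k₁ k₂ fun i j => omegaPertRep N p β s k₁ k₂ i j F
  have hd : ∀ k, |d k| ≤ (∑' k, |poissonWeight lam₁ k|) * M :=
    fun k => abs_tsum_mul_le (summable_abs_poissonWeight lam₁) fun k₁ => hA k₁ k
  have hcavity : ∀ k₁ k₂, indexAvg N p k₁ k₂ (fun i j =>
        1 / (N : ℝ) ^ (p - 1) * ∑ i₀ : Fin (p - 1) → Fin N,
          omegaPertRep N p β s k₁ k₂ i j
              (fun σs => F σs * ∏ a, (1 + tanh β * ∏ l, spin (σs a (i₀ l))))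
            / (1 + tanh β * omegaPert N p β k₁ k₂ i j fun σ => ∏ l, spin (σ (i₀ l))) ^ s)
      = indexAvg N p k₁ (k₂ + 1) fun i j => omegaPertRep N p β s k₁ (k₂ + 1) i j F := by
    intro k₁ k₂
    simp only [indexAvg_succ, omegaPertRep_cons]
  rw [quenched2_eq_tsum_poissonWeight (C := M) fun k₁ k₂ =>
    (hcavity k₁ k₂).symm ▸ hA k₁ (k₂ + 1)]
  simp only [hcavity, quenched2_eq_tsum_poissonWeight hA]
  exact ((hasDerivAt_tsum_poissonWeight_mul hd (2 * gam * t)).comp t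
    ((hasDerivAt_id t).const_mul (2 * gam))).congr_deriv (by ring)

/-- The exact streaming equation for the quenched replicated average ⟨F⟩_t of a bounded
function F of s replicas, before any expansion in powers of θ = tanh β. -/
theorem streaming_equation (N p : ℕ) (hN : 1 ≤ N) (hp : 2 ≤ p) (β : ℝ)
    (lam₁ gam : ℝ) (hlam₁ : 0 ≤ lam₁) (hgam : 0 < gam) (s : ℕ) (hs : 1 ≤ s)
    (F : (Fin s → (Fin N → Bool)) → ℝ) (M : ℝ) (hF : ∀ σs, |F σs| ≤ M)
    (t : ℝ) (ht : 0 < t) :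
    HasDerivAt
      (fun u : ℝ => quenched2 N p lam₁ (2 * gam * u)
        (fun k₁ k₂ i j => omegaPertRep N p β s k₁ k₂ i j F))
      (2 * gam *
        (quenched2 N p lam₁ (2 * gam * t) (fun k₁ k₂ i j =>
            (1 / (N : ℝ) ^ (p - 1)) * ∑ i₀ : Fin (p - 1) → Fin N,
              omegaPertRep N p β s k₁ k₂ i j
                  (fun σs => F σs * ∏ a : Fin s,
                    (1 + Real.tanh β * ∏ l : Fin (p - 1), spin (σs a (i₀ l))))
                / (1 + Real.tanh β *
                    omegaPert N p β k₁ k₂ i j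
                      (fun σ => ∏ l : Fin (p - 1), spin (σ (i₀ l)))) ^ s)
          - quenched2 N p lam₁ (2 * gam * t)
              (fun k₁ k₂ i j => omegaPertRep N p β s k₁ k₂ i j F)))
      t :=
  streaming_equation_general N p β lam₁ gam s F t
end
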